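/- Dual feasibility of subgradients: if C ∈ ∂J_λ(B) is a subgradient of the Group OWL norm J_λ at any point B ∈ ℝ^{d×q}, then the sorted row norms of C satisfy Σ_{j≤i} ‖C_{[j],:}‖₂ ≤ Σ_{j≤i} λⱼ for all i = 1,…,d. -/
import Mathlib


open scoped BigOperators

/-- `xᵀθ ∈ ℝ^q`: the row vector of inner products of `x ∈ ℝⁿ` with the columns of
`θ ∈ ℝ^{n×q}`. -/
noncomputable def rowDot {n q : ℕ} (x : Fin n → ℝ) (θ : Matrix (Fin n) (Fin q) ℝ) :
    Fin q → ℝ :=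
  fun j => ∑ i, x i * θ i j

/-- Euclidean norm of a vector. -/
noncomputable def vnorm {m : ℕ} (v : Fin m → ℝ) : ℝ :=
  Real.sqrt (∑ j, v j ^ 2)

/-- Frobenius norm of a matrix. -/
noncomputable def frob {n q : ℕ} (θ : Matrix (Fin n) (Fin q) ℝ) : ℝ :=
  Real.sqrt (∑ i, ∑ j, θ i j ^ 2)
/-- The non-increasing rearrangement of a vector `v : Fin d → ℝ`:
`sortDesc v 0 ≥ sortDesc v 1 ≥ …`. -/
noncomputable def sortDesc {d : ℕ} (v : Fin d → ℝ) : Fin d → ℝ :=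
  fun i => v (Tuple.sort v i.rev)

/-- The Group OWL penalty `J_λ(B) = Σᵢ λᵢ ‖B_{[i],:}‖₂`, pairing the non-increasing weights
`λ` with the non-increasing rearrangement of the Euclidean row norms of `B`. -/
noncomputable def groupOWL {d q : ℕ} (lam : Fin d → ℝ) (B : Matrix (Fin d) (Fin q) ℝ) : ℝ :=
  ∑ i, lam i * sortDesc (fun r => vnorm (B r)) i

section Aux

variable {d q m : ℕ}

lemma vnorm_nonneg (v : Fin m → ℝ) : 0 ≤ vnorm v := Real.sqrt_nonneg _

lemma vnorm_sq (v : Fin m → ℝ) : vnorm v ^ 2 = ∑ j, v j ^ 2 :=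
  Real.sq_sqrt (Finset.sum_nonneg fun j _ => sq_nonneg _)

lemma vnorm_eq_zero {v : Fin m → ℝ} (h : vnorm v = 0) : ∀ j, v j = 0 := by
  have hsum : (∑ j, v j ^ 2) = 0 := by
    have := vnorm_sq v
    rw [h] at this
    simpa using this.symm
  intro j
  have hj := (Finset.sum_eq_zero_iff_of_nonneg (fun j _ => sq_nonneg (v j))).1 hsum j
    (Finset.mem_univ j)
  exact pow_eq_zero_iff two_ne_zero |>.1 hj

lemma vnorm_eq_norm (v : Fin m → ℝ) :
    vnorm v = ‖(WithLp.equiv 2 (Fin m → ℝ)).symm v‖ := by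
  rw [EuclideanSpace.norm_eq]
  simp [vnorm, Real.norm_eq_abs, sq_abs]

lemma vnorm_add_le (u w : Fin m → ℝ) :
    vnorm (fun j => u j + w j) ≤ vnorm u + vnorm w := by
  rw [vnorm_eq_norm, vnorm_eq_norm, vnorm_eq_norm]
  exact norm_add_le ((WithLp.equiv 2 (Fin m → ℝ)).symm u)
    ((WithLp.equiv 2 (Fin m → ℝ)).symm w)

lemma vnorm_smul (a : ℝ) (v : Fin m → ℝ) :
    vnorm (fun j => a * v j) = |a| * vnorm v := by
  unfold vnorm
  rw [← Real.sqrt_sq_eq_abs, ← Real.sqrt_mul (sq_nonneg a), Finset.mul_sum]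
  congr 1
  refine Finset.sum_congr rfl fun j _ => ?_
  ring

lemma sortDesc_antitone (v : Fin d → ℝ) : Antitone (sortDesc v) := by
  intro i j hij
  exact Tuple.monotone_sort v (Fin.rev_le_rev.mpr hij)

lemma monovary_lam_sortDesc (lam : Fin d → ℝ)
    (hmono : ∀ i j : Fin d, i ≤ j → lam j ≤ lam i) (v : Fin d → ℝ) :
    Monovary lam (sortDesc v) := by
  intro i j h
  rcases le_total i j with hij | hij
  · exact absurd h (not_lt.2 (sortDesc_antitone v hij))
  · exact hmono j i hij

/-- Rearrangement bound: any permuted pairing of `lam` with `v` is at most the OWL value. -/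
lemma perm_sum_le_owl (lam : Fin d → ℝ)
    (hmono : ∀ i j : Fin d, i ≤ j → lam j ≤ lam i)
    (σ : Equiv.Perm (Fin d)) (v : Fin d → ℝ) :
    ∑ k, lam (σ k) * v k ≤ ∑ i, lam i * sortDesc v i := by
  classical
  set e : Equiv.Perm (Fin d) := Fin.revPerm.trans (Tuple.sort v) with he
  have hre : ∀ k, (fun k => lam (σ k) * v k) (e k) = lam ((e.trans σ) k) * sortDesc v k := by
    intro k
    simp [he, sortDesc, Equiv.trans_apply]
  calc ∑ k, lam (σ k) * v k
      = ∑ k, lam ((e.trans σ) k) * sortDesc v k := by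
        rw [← Equiv.sum_comp e (fun k => lam (σ k) * v k)]
        exact Finset.sum_congr rfl fun k _ => hre k
    _ ≤ ∑ i, lam i * sortDesc v i := by
        have h := (monovary_lam_sortDesc lam hmono v).sum_comp_perm_smul_le_sum_smul
          (σ := e.trans σ)
        simpa [smul_eq_mul] using h

/-- The OWL value is attained by some permuted pairing. -/
lemma owl_exists_perm (lam v : Fin d → ℝ) :
    ∃ σ : Equiv.Perm (Fin d), ∑ i, lam i * sortDesc v i = ∑ k, lam (σ k) * v k := by
  classical
  set e : Equiv.Perm (Fin d) := Fin.revPerm.trans (Tuple.sort v) with he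
  refine ⟨e.symm, ?_⟩
  rw [← Equiv.sum_comp e (fun k => lam (e.symm k) * v k)]
  refine Finset.sum_congr rfl fun i _ => ?_
  simp [he, sortDesc, Equiv.trans_apply]

lemma owl_mono (lam : Fin d → ℝ)
    (hmono : ∀ i j : Fin d, i ≤ j → lam j ≤ lam i)
    (hnn : ∀ i, 0 ≤ lam i)
    {u v : Fin d → ℝ} (h : ∀ k, v k ≤ u k) :
    ∑ i, lam i * sortDesc v i ≤ ∑ i, lam i * sortDesc u i := by
  obtain ⟨σ, hσ⟩ := owl_exists_perm lam v
  rw [hσ]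
  calc ∑ k, lam (σ k) * v k
      ≤ ∑ k, lam (σ k) * u k :=
        Finset.sum_le_sum fun k _ => mul_le_mul_of_nonneg_left (h k) (hnn _)
    _ ≤ _ := perm_sum_le_owl lam hmono σ u

lemma owl_add_le (lam : Fin d → ℝ)
    (hmono : ∀ i j : Fin d, i ≤ j → lam j ≤ lam i)
    (u w : Fin d → ℝ) :
    ∑ i, lam i * sortDesc (fun k => u k + w k) i
      ≤ (∑ i, lam i * sortDesc u i) + ∑ i, lam i * sortDesc w i := by
  obtain ⟨σ, hσ⟩ := owl_exists_perm lam (fun k => u k + w k)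
  rw [hσ]
  have : ∑ k, lam (σ k) * (u k + w k)
      = (∑ k, lam (σ k) * u k) + ∑ k, lam (σ k) * w k := by
    rw [← Finset.sum_add_distrib]
    exact Finset.sum_congr rfl fun k _ => by ring
  rw [this]
  exact add_le_add (perm_sum_le_owl lam hmono σ u) (perm_sum_le_owl lam hmono σ w)

/-- Any set of at most `card (Iic i)` weights sums to at most the top weights. -/
lemma sum_lam_le (lam : Fin d → ℝ)
    (hmono : ∀ i j : Fin d, i ≤ j → lam j ≤ lam i)
    (hnn : ∀ i, 0 ≤ lam i) (i : Fin d) (T : Finset (Fin d))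
    (hT : T.card ≤ (Finset.Iic i).card) :
    ∑ m ∈ T, lam m ≤ ∑ j ∈ Finset.Iic i, lam j := by
  classical
  set A := T \ Finset.Iic i with hA
  set Bs := Finset.Iic i \ T with hBs
  have hcard : A.card ≤ Bs.card := by
    rw [hA, hBs]
    have h1 := Finset.card_sdiff_add_card_inter T (Finset.Iic i)
    have h2 := Finset.card_sdiff_add_card_inter (Finset.Iic i) T
    rw [Finset.inter_comm] at h2
    omega
  have hsplitT : ∑ m ∈ T, lam m
      = (∑ m ∈ A, lam m) + ∑ m ∈ T ∩ Finset.Iic i, lam m := by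
    rw [hA, ← Finset.sdiff_inter_self_left T (Finset.Iic i)]
    exact (Finset.sum_sdiff Finset.inter_subset_left).symm
  have hsplitI : ∑ m ∈ Finset.Iic i, lam m
      = (∑ m ∈ Bs, lam m) + ∑ m ∈ T ∩ Finset.Iic i, lam m := by
    rw [hBs, ← Finset.sdiff_inter_self_left (Finset.Iic i) T]
    rw [Finset.inter_comm]
    exact (Finset.sum_sdiff Finset.inter_subset_right).symm
  have hAle : ∑ m ∈ A, lam m ≤ A.card • lam i := by
    refine Finset.sum_le_card_nsmul _ _ _ fun m hm => ?_
    rw [hA, Finset.mem_sdiff, Finset.mem_Iic] at hm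
    exact hmono i m (le_of_not_ge hm.2)
  have hBle : Bs.card • lam i ≤ ∑ m ∈ Bs, lam m := by
    refine Finset.card_nsmul_le_sum _ _ _ fun m hm => ?_
    rw [hBs, Finset.mem_sdiff, Finset.mem_Iic] at hm
    exact hmono m i hm.1
  have hmid : A.card • lam i ≤ Bs.card • lam i := by
    simp only [nsmul_eq_mul]
    exact mul_le_mul_of_nonneg_right (by exact_mod_cast hcard) (hnn i)
  rw [hsplitT, hsplitI]
  exact add_le_add (hAle.trans (hmid.trans hBle)) le_rfl

end Aux

/-- **Dual feasibility of subgradients.** If `C` is a subgradient of the Group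
OWL norm `J_λ` at some point `B`, then the sorted row norms of `C` satisfy
`Σ_{j≤i} ‖C_{[j],:}‖₂ ≤ Σ_{j≤i} λⱼ` for all `i`. -/
theorem groupOWL_subgradient_dual_feasible {d q : ℕ}
    (lam : Fin d → ℝ) (hmono : ∀ i j : Fin d, i ≤ j → lam j ≤ lam i)
    (hnn : ∀ i, 0 ≤ lam i)
    (B C : Matrix (Fin d) (Fin q) ℝ)
    (hsub : ∀ B' : Matrix (Fin d) (Fin q) ℝ,
      groupOWL lam B + ∑ i, ∑ j, C i j * (B' i j - B i j) ≤ groupOWL lam B') :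
    ∀ i : Fin d,
      ∑ j ∈ Finset.Iic i, sortDesc (fun r => vnorm (C r)) j ≤ ∑ j ∈ Finset.Iic i, lam j := by
  classical
  intro i
  set NC : Fin d → ℝ := fun r => vnorm (C r) with hNCdef
  set τ : Equiv.Perm (Fin d) := Tuple.sort NC with hτ
  set S : Finset (Fin d) := (Finset.Iic i).image (fun j => τ j.rev) with hSdef
  have hinj : Function.Injective (fun j : Fin d => τ j.rev) := fun a b h =>
    Fin.rev_injective (τ.injective h)
  have hcardS : S.card = (Finset.Iic i).card := Finset.card_image_of_injective _ hinj
  set X : Matrix (Fin d) (Fin q) ℝ :=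
    fun r j => if r ∈ S ∧ NC r ≠ 0 then C r j / NC r else 0 with hX
  -- row inner products
  have hrow : ∀ r, (∑ j, C r j * X r j) = if r ∈ S then NC r else 0 := by
    intro r
    by_cases hrS : r ∈ S
    · by_cases h0 : NC r = 0
      · have hz : ∀ j, C r j = 0 := vnorm_eq_zero h0
        simp [hrS, h0, hz]
      · have hNCr : NC r = vnorm (C r) := rfl
        have hsq : (∑ j, C r j ^ 2) = NC r ^ 2 := by rw [hNCr, vnorm_sq]
        have hstep : (∑ j, C r j * X r j) = (∑ j, C r j ^ 2) / NC r := by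
          rw [Finset.sum_div]
          refine Finset.sum_congr rfl fun j _ => ?_
          have : X r j = C r j / NC r := by simp [hX, hrS, h0]
          rw [this]
          ring
        rw [hstep, hsq, if_pos hrS, sq, mul_div_assoc, div_self h0, mul_one]
    · simp [hX, hrS]
  -- value of the total inner product
  have hinner : (∑ r, ∑ j, C r j * X r j) = ∑ j ∈ Finset.Iic i, sortDesc NC j := by
    calc ∑ r, ∑ j, C r j * X r j
        = ∑ r, (if r ∈ S then NC r else 0) := Finset.sum_congr rfl fun r _ => hrow r
      _ = ∑ r ∈ S, NC r := by rw [Finset.sum_ite_mem, Finset.univ_inter]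
      _ = ∑ j ∈ Finset.Iic i, NC (τ j.rev) :=
          (Finset.sum_image fun a _ b _ h => hinj h)
      _ = ∑ j ∈ Finset.Iic i, sortDesc NC j := rfl
  -- use the subgradient inequality with B' = B + X
  have hs := hsub (B + X)
  have hsum_eq : (∑ r, ∑ j, C r j * ((B + X) r j - B r j)) = ∑ r, ∑ j, C r j * X r j := by
    refine Finset.sum_congr rfl fun r _ => Finset.sum_congr rfl fun j _ => ?_
    simp [Matrix.add_apply]
  rw [hsum_eq, hinner] at hs
  -- bound groupOWL lam (B + X)
  have h1 : groupOWL lam (B + X)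
      ≤ ∑ k, lam k * sortDesc (fun r => vnorm (B r) + vnorm (X r)) k := by
    show (∑ k, lam k * sortDesc (fun r => vnorm ((B + X) r)) k) ≤ _
    refine owl_mono lam hmono hnn fun r => ?_
    exact vnorm_add_le (B r) (X r)
  have h2 : (∑ k, lam k * sortDesc (fun r => vnorm (B r) + vnorm (X r)) k)
      ≤ groupOWL lam B + ∑ k, lam k * sortDesc (fun r => vnorm (X r)) k := by
    show _ ≤ (∑ k, lam k * sortDesc (fun r => vnorm (B r)) k) + _
    exact owl_add_le lam hmono _ _
  have h3 : (∑ k, lam k * sortDesc (fun r => vnorm (X r)) k)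
      ≤ ∑ k, lam k * sortDesc (fun r => if r ∈ S then (1 : ℝ) else 0) k := by
    refine owl_mono lam hmono hnn fun r => ?_
    by_cases hc : r ∈ S ∧ NC r ≠ 0
    · have hXr : X r = fun j => (NC r)⁻¹ * C r j := by
        funext j
        simp [hX, hc, div_eq_inv_mul]
      have h01 : vnorm (X r) = 1 := by
        rw [hXr, vnorm_smul, abs_of_nonneg (inv_nonneg.2 (vnorm_nonneg (C r)))]
        exact inv_mul_cancel₀ hc.2
      simp [h01, hc.1]
    · have hXr : X r = fun _ => (0 : ℝ) := by
        funext j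
        simp only [hX]
        rw [if_neg hc]
      have h00 : vnorm (X r) = 0 := by
        rw [hXr]
        simp [vnorm]
      rw [h00]
      split <;> norm_num
  have h4 : (∑ k, lam k * sortDesc (fun r => if r ∈ S then (1 : ℝ) else 0) k)
      ≤ ∑ j ∈ Finset.Iic i, lam j := by
    obtain ⟨σ, hσ⟩ := owl_exists_perm lam (fun r => if r ∈ S then (1 : ℝ) else 0)
    rw [hσ]
    calc ∑ k, lam (σ k) * (if k ∈ S then (1 : ℝ) else 0)
        = ∑ k, (if k ∈ S then lam (σ k) else 0) := by
          refine Finset.sum_congr rfl fun k _ => ?_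
          split <;> simp
      _ = ∑ k ∈ S, lam (σ k) := by rw [Finset.sum_ite_mem, Finset.univ_inter]
      _ = ∑ m ∈ S.image σ, lam m := (Finset.sum_image fun a _ b _ h => σ.injective h).symm
      _ ≤ ∑ j ∈ Finset.Iic i, lam j := by
          refine sum_lam_le lam hmono hnn i _ ?_
          rw [Finset.card_image_of_injective _ σ.injective, hcardS]
  linarith
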